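/- arXiv:math/0201110 — 4 statements merged into one kernel-verified Lean document; each statement's English description precedes it below -/
import Mathlib

section
/- Let C ⊆ ℝⁿ be a full-dimensional polyhedral cone, let G be a finite group of linear automorphisms of ℝⁿ with g(C) = C for all g ∈ G, and let H be a subgroup of G. Set C_H = {x ∈ C : h(x) = x for all h ∈ H} and let m be the dimension of the linear span of C_H. Suppose f is a linear functional with f(x) ≥ 0 for all x ∈ C such that F = {x ∈ C : f(x) = 0} is a facet of C (a face of dimension n−1) and h(F) = F for all h ∈ H. Then F ∩ C_H = {x ∈ C_H : f(x) = 0} is a face of the cone C_H of dimension m−1, i.e. a facet of C_H. -/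
/-!
Averaging over the finite group `H` is a linear projection onto the `H`-invariant vectors `Vᴴ`
that maps every `H`-stable convex set into itself. Hence the fixed part `s ∩ Vᴴ` of an
`H`-stable convex set `s` spans `span s ⊓ Vᴴ`. For `s = C` this is `Vᴴ`, and for `s = F`, which
spans the hyperplane `ker f`, it is `Vᴴ ⊓ ker f`. Averaging a point of `C` off the facet gives an
invariant vector on which `f` is positive, so `ker f` cuts `Vᴴ` in codimension one.
-/

/-- A polyhedral cone in `ℝⁿ`: the solution set of finitely many
linear inequalities `fᵢ(x) ≥ 0`. -/
def IsPolyhedralCone {n : ℕ} (C : Set (Fin n → ℝ)) : Prop :=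
  ∃ (m : ℕ) (f : Fin m → ((Fin n → ℝ) →ₗ[ℝ] ℝ)), C = {x | ∀ i, 0 ≤ f i x}

/-- `F` is a face of `C`: there is a linear functional nonnegative on `C`
whose zero set in `C` is `F`. -/
def IsFaceOf {n : ℕ} (C F : Set (Fin n → ℝ)) : Prop :=
  ∃ f : (Fin n → ℝ) →ₗ[ℝ] ℝ, (∀ x ∈ C, 0 ≤ f x) ∧ F = {x ∈ C | f x = 0}

/-- The dimension of a face: the dimension of its linear span. -/
noncomputable def faceDim {n : ℕ} (F : Set (Fin n → ℝ)) : ℕ :=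
  Module.finrank ℝ (Submodule.span ℝ F)

/-- A cone is salient (pointed) if `C ∩ (−C) = {0}`. -/
def IsSalient {n : ℕ} (C : Set (Fin n → ℝ)) : Prop :=
  ∀ x ∈ C, -x ∈ C → x = 0

open Set Submodule

namespace Representation

variable {𝕜 G V : Type*} [Field 𝕜] [LinearOrder 𝕜] [IsStrictOrderedRing 𝕜] [Group G] [Fintype G]
  [AddCommGroup V] [Module 𝕜 V] {ρ : Representation 𝕜 G V} {s : Set V}

lemma averageMap_apply (ρ : Representation 𝕜 G V) (v : V) :
    ρ.averageMap v = ∑ g, (Fintype.card G : 𝕜)⁻¹ • ρ g v := by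
  simp [GroupAlgebra.average, map_sum, Finset.smul_sum]

lemma mapsTo_averageMap (hs : Convex 𝕜 s) (hρs : ∀ g, MapsTo (ρ g) s s) :
    MapsTo ρ.averageMap s s := fun v hv => by
  rw [averageMap_apply]
  refine hs.sum_mem (fun _ _ => by positivity) ?_ fun g _ => hρs g hv
  simp [Finset.card_univ]

lemma image_averageMap (hs : Convex 𝕜 s) (hρs : ∀ g, MapsTo (ρ g) s s) :
    ρ.averageMap '' s = s ∩ ρ.invariants := by
  refine subset_antisymm ?_ fun v hv => ⟨v, hv.1, ρ.averageMap_id v hv.2⟩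
  rintro _ ⟨v, hv, rfl⟩
  exact ⟨mapsTo_averageMap hs hρs hv, ρ.averageMap_invariant v⟩

lemma span_inter_invariants (hs : Convex 𝕜 s) (hρs : ∀ g, MapsTo (ρ g) s s) :
    span 𝕜 (s ∩ ρ.invariants) = span 𝕜 s ⊓ ρ.invariants := by
  refine le_antisymm (le_inf (span_mono inter_subset_left) (span_le.mpr inter_subset_right))
    fun v ⟨hv, hv_inv⟩ => ?_
  rw [← image_averageMap hs hρs, span_image, ← ρ.averageMap_id v hv_inv]
  exact mem_map_of_mem hv

lemma averageMap_pos {f : V →ₗ[𝕜] 𝕜} (hρs : ∀ g, MapsTo (ρ g) s s) (hf : ∀ x ∈ s, 0 ≤ f x)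
    {v : V} (hv : v ∈ s) (hfv : 0 < f v) : 0 < f (ρ.averageMap v) := by
  rw [averageMap_apply, map_sum]
  refine Finset.sum_pos' (fun g _ => ?_) ⟨1, Finset.mem_univ _, ?_⟩
  · rw [map_smul]
    exact smul_nonneg (by positivity) (hf _ (hρs g hv))
  · simpa using mul_pos (by positivity) hfv

end Representation

lemma Submodule.finrank_inf_ker_add_one {K V : Type*} [Field K] [AddCommGroup V] [Module K V]
    [FiniteDimensional K V] {W : Submodule K V} {f : Module.Dual K V} {w : V} (hw : w ∈ W)
    (hfw : f w ≠ 0) : Module.finrank K ↥(W ⊓ LinearMap.ker f) + 1 = Module.finrank K W := by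
  have hker := Module.Dual.finrank_ker_add_one_of_ne_zero fun h : f = 0 => hfw (by simp [h])
  have hlt : LinearMap.ker f < W ⊔ LinearMap.ker f :=
    lt_of_le_of_ne le_sup_right fun h => hfw (h ▸ mem_sup_left hw : w ∈ LinearMap.ker f)
  have := finrank_lt_finrank_of_lt hlt
  have := finrank_le (W ⊔ LinearMap.ker f)
  have := finrank_sup_add_finrank_inf_eq W (LinearMap.ker f)
  omega

lemma Submodule.span_eq_ker_of_finrank_add_one {K V : Type*} [Field K] [AddCommGroup V]
    [Module K V] [FiniteDimensional K V] {s : Set V} {f : Module.Dual K V} (hf : f ≠ 0)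
    (hs : s ⊆ LinearMap.ker f) (hdim : Module.finrank K (span K s) + 1 = Module.finrank K V) :
    span K s = LinearMap.ker f :=
  eq_of_le_of_finrank_le (span_le.mpr hs)
    (by have := Module.Dual.finrank_ker_add_one_of_ne_zero hf; omega)

lemma IsPolyhedralCone.convex {n : ℕ} {C : Set (Fin n → ℝ)} (hC : IsPolyhedralCone C) :
    Convex ℝ C := by
  obtain ⟨m, f, rfl⟩ := hC
  simpa only [ofPred_forall] using convex_iInter fun i => convex_halfSpace_ge (f i).isLinear 0

lemma exists_pos_of_faceDim_eq {n : ℕ} {C F : Set (Fin n → ℝ)} (hfull : span ℝ C = ⊤)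
    {f : (Fin n → ℝ) →ₗ[ℝ] ℝ} (hf : ∀ x ∈ C, 0 ≤ f x) (hF : F = {x ∈ C | f x = 0}) (hn : 0 < n)
    (hFdim : faceDim F = n - 1) : ∃ x ∈ C, 0 < f x := by
  by_contra! h
  have : span ℝ F = ⊤ := top_le_iff.mp <| hfull ▸ span_mono fun x hx =>
    hF ▸ ⟨hx, le_antisymm (h x hx) (hf x hx)⟩
  rw [faceDim, this, finrank_top, Module.finrank_fin_fun] at hFdim
  omega

/-- if a facet `F` of a full-dimensional polyhedral cone `C` is
invariant under a subgroup `H` of the symmetry group `G` of `C`, then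
`F ∩ C_H` is a facet of the fixed cone `C_H`. -/
theorem facet_of_fixed_cone {n : ℕ} (C : Set (Fin n → ℝ))
    (hC : IsPolyhedralCone C)
    (hfull : Submodule.span ℝ C = ⊤)
    (G : Subgroup ((Fin n → ℝ) ≃ₗ[ℝ] (Fin n → ℝ))) [Finite G]
    (hG : ∀ g ∈ G, ⇑g '' C = C)
    (H : Subgroup ((Fin n → ℝ) ≃ₗ[ℝ] (Fin n → ℝ))) (hHG : H ≤ G)
    (CH : Set (Fin n → ℝ)) (hCH : CH = {x ∈ C | ∀ h ∈ H, h x = x})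
    (m : ℕ) (hm : m = faceDim CH)
    (f : (Fin n → ℝ) →ₗ[ℝ] ℝ) (hf : ∀ x ∈ C, 0 ≤ f x)
    (F : Set (Fin n → ℝ)) (hF : F = {x ∈ C | f x = 0})
    (hFdim : faceDim F = n - 1)
    (hFsym : ∀ h ∈ H, ⇑h '' F = F) :
    F ∩ CH = {x ∈ CH | f x = 0} ∧
    IsFaceOf CH {x ∈ CH | f x = 0} ∧
    faceDim {x ∈ CH | f x = 0} = m - 1 := by
  have hFCH : F ∩ CH = {x ∈ CH | f x = 0} := by
    ext x; rw [hF, hCH]; simp only [mem_inter_iff, mem_ofPred_eq]; tauto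
  refine ⟨hFCH, ⟨f, fun x hx => hf x (hCH ▸ hx).1, rfl⟩, ?_⟩
  rcases Nat.eq_zero_or_pos n with rfl | hn
  · simp only [faceDim, hm, Module.finrank_zero_of_subsingleton]
  have : Finite H := Finite.of_injective _ (Subgroup.inclusion_injective hHG)
  let := Fintype.ofFinite H
  let ρ := Representation.ofDistribMulAction ℝ H (Fin n → ℝ)
  have hρC : ∀ h, MapsTo (ρ h) C C := fun h x hx => hG h (hHG h.2) ▸ mem_image_of_mem _ hx
  have hρF : ∀ h, MapsTo (ρ h) F F := fun h x hx => hFsym h h.2 ▸ mem_image_of_mem _ hx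
  have hCH_eq : CH = C ∩ ρ.invariants := by
    ext; simp [hCH, Representation.mem_invariants, ρ, LinearEquiv.smul_def]
  obtain ⟨x₀, hx₀C, hx₀⟩ := exists_pos_of_faceDim_eq hfull hf hF hn hFdim
  have hf_avg := Representation.averageMap_pos hρC hf hx₀C hx₀
  have hspanF : span ℝ F = LinearMap.ker f := by
    refine span_eq_ker_of_finrank_add_one (fun h : f = 0 => by simp [h] at hf_avg)
      (fun x hx => (hF ▸ hx).2) ?_
    rw [← faceDim, hFdim, Module.finrank_fin_fun]; omega
  have hF_conv : Convex ℝ F := hF ▸ hC.convex.inter (convex_hyperplane f.isLinear 0)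
  have hS : {x ∈ CH | f x = 0} = F ∩ ρ.invariants := by
    ext x; rw [hCH_eq, hF]; simp only [mem_inter_iff, mem_ofPred_eq, SetLike.mem_coe]; tauto
  have hcodim := ρ.invariants.finrank_inf_ker_add_one (ρ.averageMap_invariant x₀) hf_avg.ne'
  rw [hm, faceDim, faceDim, hS, hCH_eq, Representation.span_inter_invariants hF_conv hρF,
    Representation.span_inter_invariants hC.convex hρC, hspanF, hfull, top_inf_eq, inf_comm]
  omega
end

section
/- Let C = {x ∈ ℝⁿ : fᵢ(x) ≥ 0 for all i ∈ I} be a full-dimensional polyhedral cone given by a finite irredundant family of linear functionals (fᵢ)_{i∈I}, i.e. each Fᵢ = {x ∈ C : fᵢ(x) = 0} is a facet of C and no fᵢ is a nonnegative combination of the others. Let j, k ∈ I be distinct with F_j ≠ F_k. Then F_j and F_k are NOT adjacent (i.e. dim(F_j ∩ F_k) < n − 2) if and only if there exist λᵢ ≥ 0 for i ∈ I∖{j,k} and λ_j > 0, λ_k > 0 such that Σ_{i ∈ I∖{j,k}} λᵢ fᵢ = λ_j f_j + λ_k f_k. -/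
/-!
Fix a point `x₀` with all `f i x₀ > 0` (it exists since `C` spans). Gordan's alternative, applied
on `ker f_i`, together with irredundancy gives each facet a relative interior point: `f_i = 0`
there and every other `f_l > 0`. Put `W = ker f_j ⊓ ker f_k`, of dimension `n - 2`, which
contains `F_j ∩ F_k`. If some point of `W` is strictly positive on all the other `f_i`, then
`F_j ∩ F_k` spans `W`. Otherwise Gordan's alternative on `W` yields a nonzero nonnegative
combination of the other `f_i` vanishing on `W`, hence equal to `a f_j + b f_k`, and evaluating at
the relative interior points of `F_j` and `F_k` gives `a, b > 0`. Conversely, given such a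
combination, some `f_i` with `λ_i > 0` vanishes on `F_j ∩ F_k`; if that set spanned `W`, `f_i`
would be a positive combination of `f_j` and `f_k`, contradicting irredundancy.
-/

open Module Finset Topology
open LinearMap (ker)

/-- Gordan's alternative. -/
theorem Submodule.exists_pos_dotProduct_eq_zero {κ : Type*} [Fintype κ]
    (L : Submodule ℝ (κ → ℝ)) (hL : ∀ y ∈ L, ∃ i, y i ≤ 0) :
    ∃ ν : κ → ℝ, 0 < ν ∧ ∀ y ∈ L, ν ⬝ᵥ y = 0 := by
  classical
  set O : Set (κ → ℝ) := Set.univ.pi fun _ => Set.Ioi 0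
  have hdisj : Disjoint O L := Set.disjoint_left.2 fun y hyO hyL => by
    obtain ⟨i, hi⟩ := hL y hyL
    exact hi.not_gt (hyO i (Set.mem_univ i))
  obtain ⟨φ, u, hφO, hφLu⟩ := geometric_hahn_banach_open
    (convex_pi fun _ _ => convex_Ioi 0) (isOpen_set_pi Set.finite_univ fun _ _ => isOpen_Ioi)
    L.convex hdisj
  have hu : u ≤ 0 := by simpa using hφLu 0 L.zero_mem
  have hφL : ∀ y ∈ L, φ y = 0 := by
    intro y hy
    by_contra hne
    have := hφLu (((u - 1) / φ y) • y) (L.smul_mem _ hy)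
    rw [map_smul, smul_eq_mul, div_mul_cancel₀ _ hne] at this
    linarith
  set ν : κ → ℝ := fun i => -φ (Pi.single i 1)
  have hφ : ∀ y, φ y = -(ν ⬝ᵥ y) := by
    intro y
    conv_lhs => rw [← Finset.univ_sum_single y]
    simp only [map_sum, ν, dotProduct, neg_mul, Finset.sum_neg_distrib, neg_neg]
    refine Finset.sum_congr rfl fun i _ => ?_
    have := map_smul φ (y i) (Pi.single i (1 : ℝ))
    rw [← Pi.single_smul', smul_eq_mul, mul_one] at this
    rw [this, smul_eq_mul, mul_comm]
  have hνO : ∀ y ∈ O, 0 < ν ⬝ᵥ y := fun y hy => by linarith [hφ y, hφO y hy]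
  have hν1 : 0 < ∑ i, ν i := by
    simpa [dotProduct_one] using hνO 1 fun i _ => Set.mem_Ioi.2 one_pos
  have hν0 : 0 ≤ ν := by
    intro i
    by_contra! hi
    replace hi : ν i < 0 := hi
    -- moving from `1` along `eᵢ` stays in `O` but drives `ν ⬝ᵥ y` down to `0`
    have hy : 1 + Pi.single i ((∑ l, ν l) / -ν i) ∈ O := fun l _ => by
      have : 0 ≤ (Pi.single i ((∑ l, ν l) / -ν i) : κ → ℝ) l := by
        rcases eq_or_ne l i with rfl | h
        · simpa using div_nonneg hν1.le (neg_nonneg.2 hi.le)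
        · simp [h]
      simp only [Pi.add_apply, Pi.one_apply, Set.mem_Ioi]
      linarith
    have := hνO _ hy
    rw [dotProduct_add, dotProduct_one, dotProduct_single] at this
    have : ν i * ((∑ l, ν l) / -ν i) = -∑ l, ν l := by field_simp [hi.ne]
    linarith
  refine ⟨ν, lt_of_le_of_ne hν0 fun h => ?_, fun y hy => by linarith [hφ y, hφL y hy]⟩
  simp [← h] at hν1

section Functionals

variable {K ι E : Type*} [Field K] [AddCommGroup E] [Module K E]

theorem mem_span_image_of_forall_eq_zero (f : ι → E →ₗ[K] K) (t : Finset ι) {g : E →ₗ[K] K}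
    (h : ∀ x, (∀ i ∈ t, f i x = 0) → g x = 0) : g ∈ Submodule.span K (f '' t) := by
  rw [Set.image_eq_range]
  refine mem_span_of_iInf_ker_le_ker fun x hx => h x fun i hi => ?_
  exact (Submodule.mem_iInf _).1 hx ⟨i, hi⟩

theorem finrank_ker_inf_ker_add_two [FiniteDimensional K E] {g h : E →ₗ[K] K} {u v : E}
    (hgu : g u = 0) (hhu : h u ≠ 0) (hgv : g v ≠ 0) (hhv : h v = 0) :
    finrank K (ker g ⊓ ker h : Submodule K E) + 2 = finrank K E := by
  have hsurj : Function.Surjective (g.prod h) := fun ⟨a, b⟩ =>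
    ⟨(a / g v) • v + (b / h u) • u, by simp [hgu, hhu, hgv, hhv]⟩
  rw [← LinearMap.ker_prod, ← (g.prod h).finrank_range_add_finrank_ker,
    LinearMap.range_eq_top.2 hsurj, finrank_top, finrank_prod, finrank_self, add_comm]

end Functionals

section RealFunctionals

variable {ι E : Type*} [AddCommGroup E] [Module ℝ E]

theorem exists_sum_smul_mem_span_of_forall_exists_nonpos (f : ι → E →ₗ[ℝ] ℝ) (s t : Finset ι)
    (h : ∀ x, (∀ i ∈ t, f i x = 0) → ∃ i ∈ s, f i x ≤ 0) :
    ∃ μ : ι → ℝ, (∀ i ∈ s, 0 ≤ μ i) ∧ (∃ i ∈ s, 0 < μ i) ∧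
      ∑ i ∈ s, μ i • f i ∈ Submodule.span ℝ (f '' t) := by
  classical
  let A : E →ₗ[ℝ] s → ℝ := LinearMap.pi fun i => f i
  obtain ⟨ν, hν, hνA⟩ := (Submodule.map A (⨅ i : t, ker (f i))).exists_pos_dotProduct_eq_zero <| by
    rintro _ ⟨x, hx, rfl⟩
    obtain ⟨i, hi, hix⟩ := h x fun i hi => (Submodule.mem_iInf _).1 hx ⟨i, hi⟩
    exact ⟨⟨i, hi⟩, hix⟩
  obtain ⟨hν0, i₀, hi₀⟩ := Pi.lt_def.1 hν
  let μ : ι → ℝ := fun i => if hi : i ∈ s then ν ⟨i, hi⟩ else 0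
  have hμ : ∑ i ∈ s, μ i • f i = ∑ i : s, ν i • f i := by
    rw [← Finset.sum_coe_sort s]
    exact Finset.sum_congr rfl fun i _ => by simp [μ]
  refine ⟨μ, fun i hi => by simpa [μ, hi] using hν0 ⟨i, hi⟩, ⟨i₀, i₀.2, by simpa [μ] using hi₀⟩, ?_⟩
  rw [hμ]
  refine mem_span_image_of_forall_eq_zero f t fun x hx => ?_
  have := hνA (A x) ⟨x, (Submodule.mem_iInf _).2 fun i => hx i i.2, rfl⟩
  simpa [dotProduct, A, mul_comm] using this

theorem sum_smul_apply_pos (f : ι → E →ₗ[ℝ] ℝ) {s : Finset ι} {μ : ι → ℝ}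
    (hμ0 : ∀ i ∈ s, 0 ≤ μ i) (hμ : ∃ i ∈ s, 0 < μ i) {x : E} (hx : ∀ i ∈ s, 0 < f i x) :
    0 < (∑ i ∈ s, μ i • f i) x := by
  obtain ⟨i, hi, hμi⟩ := hμ
  rw [LinearMap.sum_apply]
  exact Finset.sum_pos' (fun l hl => mul_nonneg (hμ0 l hl) (hx l hl).le)
    ⟨i, hi, mul_pos hμi (hx i hi)⟩

theorem exists_pos_forall_pos_add_mul {s : Finset ι} {a : ι → ℝ} (ha : ∀ i ∈ s, 0 < a i)
    (b : ι → ℝ) : ∃ ε > 0, ∀ i ∈ s, 0 < a i + ε * b i := by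
  have : ∀ᶠ ε in 𝓝[>] (0 : ℝ), ∀ i ∈ s, 0 < a i + ε * b i := by
    refine (Filter.eventually_all_finset s).2 fun i hi => ?_
    have : Filter.Tendsto (fun ε : ℝ => a i + ε * b i) (𝓝[>] 0) (𝓝 (a i + 0 * b i)) :=
      (tendsto_const_nhds.add (Filter.tendsto_id.mul_const (b i))).mono_left nhdsWithin_le_nhds
    exact this.eventually_const_lt (by simpa using ha i hi)
  exact (this.and self_mem_nhdsWithin).exists.imp fun ε h => ⟨h.2, h.1⟩

theorem span_inter_setOf_nonneg_eq (f : ι → E →ₗ[ℝ] ℝ) (V : Submodule ℝ E) (s : Finset ι)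
    {w : E} (hwV : w ∈ V) (hw : ∀ i ∈ s, 0 < f i w) :
    Submodule.span ℝ ((V : Set E) ∩ {x | ∀ i ∈ s, 0 ≤ f i x}) = V := by
  refine le_antisymm (Submodule.span_le.2 Set.inter_subset_left) fun u hu => ?_
  obtain ⟨ε, hε, hεu⟩ := exists_pos_forall_pos_add_mul hw fun i => f i u
  have hmem : w + ε • u ∈ (V : Set E) ∩ {x | ∀ i ∈ s, 0 ≤ f i x} :=
    ⟨V.add_mem hwV (V.smul_mem ε hu), fun i hi => by simpa using (hεu i hi).le⟩
  have hw' : w ∈ (V : Set E) ∩ {x | ∀ i ∈ s, 0 ≤ f i x} := ⟨hwV, fun i hi => (hw i hi).le⟩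
  have : u = ε⁻¹ • ((w + ε • u) - w) := by rw [add_sub_cancel_left, inv_smul_smul₀ hε.ne']
  rw [this]
  exact Submodule.smul_mem _ _
    (Submodule.sub_mem _ (Submodule.subset_span hmem) (Submodule.subset_span hw'))

theorem exists_forall_pos_of_span_eq_top [Fintype ι] {f : ι → E →ₗ[ℝ] ℝ} (hf : ∀ i, f i ≠ 0)
    (hfull : Submodule.span ℝ {x | ∀ i, 0 ≤ f i x} = ⊤) : ∃ x, ∀ i, 0 < f i x := by
  have hpos : ∀ i, ∃ y, (∀ l, 0 ≤ f l y) ∧ 0 < f i y := by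
    intro i
    by_contra! h
    refine hf i (LinearMap.ker_eq_top.1 (top_le_iff.1 (hfull ▸ Submodule.span_le.2 fun y hy => ?_)))
    exact le_antisymm (h y hy) (hy i)
  choose y hyC hypos using hpos
  refine ⟨∑ i, y i, fun l => ?_⟩
  rw [map_sum]
  exact sum_pos' (fun i _ => hyC i l) ⟨l, mem_univ l, hypos l⟩

theorem pos_of_smul_add_smul_eq {g h φ : E →ₗ[ℝ] ℝ} {a b : ℝ} (hab : a • g + b • h = φ) {z : E}
    (hgz : g z = 0) (hhz : 0 < h z) (hφz : 0 < φ z) : 0 < b := by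
  rw [← hab] at hφz
  simp only [LinearMap.add_apply, LinearMap.smul_apply, smul_eq_mul, hgz, mul_zero, zero_add]
    at hφz
  exact pos_of_mul_pos_left hφz hhz.le

end RealFunctionals

section PolyhedralCone

variable {ι E : Type*} [Fintype ι] [DecidableEq ι] [AddCommGroup E] [Module ℝ E]

def Irredundant (f : ι → E →ₗ[ℝ] ℝ) : Prop :=
  ∀ i, ¬ ∃ mu : ι → ℝ, (∀ l, 0 ≤ mu l) ∧ f i = ∑ l ∈ univ.erase i, mu l • f l

def PairInConeOfRest (f : ι → E →ₗ[ℝ] ℝ) (j k : ι) : Prop :=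
  ∃ lam : ι → ℝ, (∀ i, i ≠ j → i ≠ k → 0 ≤ lam i) ∧ 0 < lam j ∧ 0 < lam k ∧
    ∑ i ∈ (univ.erase j).erase k, lam i • f i = lam j • f j + lam k • f k

def face (f : ι → E →ₗ[ℝ] ℝ) (i : ι) : Set E :=
  {x ∈ {x | ∀ l, 0 ≤ f l x} | f i x = 0}

theorem face_inter_face_eq (f : ι → E →ₗ[ℝ] ℝ) (j k : ι) :
    face f j ∩ face f k =
      ((ker (f j) ⊓ ker (f k) : Submodule ℝ E) : Set E) ∩
        {x | ∀ i ∈ (univ.erase j).erase k, 0 ≤ f i x} := by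
  ext x
  simp only [face, Set.mem_inter_iff, Set.mem_ofPred_eq, SetLike.mem_coe, Submodule.mem_inf,
    mem_erase, mem_univ, and_true]
  constructor
  · rintro ⟨⟨hxC, hjx⟩, -, hkx⟩
    exact ⟨⟨hjx, hkx⟩, fun i _ => hxC i⟩
  · rintro ⟨⟨hjx, hkx⟩, hx⟩
    have hxC : ∀ i, 0 ≤ f i x := fun i => by
      by_cases hij : i = j
      · exact hij ▸ hjx.ge
      by_cases hik : i = k
      · exact hik ▸ hkx.ge
      exact hx i ⟨hik, hij⟩
    exact ⟨⟨hxC, hjx⟩, hxC, hkx⟩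

theorem span_face_inter_face_le (f : ι → E →ₗ[ℝ] ℝ) (j k : ι) :
    Submodule.span ℝ (face f j ∩ face f k) ≤ ker (f j) ⊓ ker (f k) := by
  rw [face_inter_face_eq, Submodule.span_le]
  exact Set.inter_subset_left

variable {f : ι → E →ₗ[ℝ] ℝ}

theorem Irredundant.ne_sum_smul (hf : Irredundant f) {i : ι} {u : Finset ι} (hi : i ∉ u)
    {c : ι → ℝ} (hc : ∀ l ∈ u, 0 ≤ c l) : f i ≠ ∑ l ∈ u, c l • f l := by
  intro h
  refine hf i ⟨fun l => if l ∈ u then c l else 0, fun l => ?_, ?_⟩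
  · dsimp only
    split_ifs with hl
    exacts [hc l hl, le_rfl]
  · have hu : univ.erase i ∩ u = u :=
      inter_eq_right.2 fun l hl => mem_erase.2 ⟨ne_of_mem_of_not_mem hl hi, mem_univ l⟩
    simp_rw [ite_smul, zero_smul, sum_ite_mem, hu, h]

theorem Irredundant.ne_zero (hf : Irredundant f) (i : ι) : f i ≠ 0 := by
  simpa using hf.ne_sum_smul (notMem_empty i) (c := 0) (by simp)

variable {x₀ : E}

theorem Irredundant.exists_eq_zero_forall_ne_pos (hf : Irredundant f) (hx₀ : ∀ i, 0 < f i x₀)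
    (i : ι) : ∃ z, f i z = 0 ∧ ∀ l ≠ i, 0 < f l z := by
  by_contra! h
  obtain ⟨μ, hμ0, hμ, hspan⟩ := exists_sum_smul_mem_span_of_forall_exists_nonpos f
    (univ.erase i) {i} fun x hx => by
      obtain ⟨l, hli, hl⟩ := h x (hx i (mem_singleton_self i))
      exact ⟨l, mem_erase.2 ⟨hli, mem_univ l⟩, hl⟩
  rw [coe_singleton, Set.image_singleton, Submodule.mem_span_singleton] at hspan
  obtain ⟨a, ha⟩ := hspan
  have hpos := sum_smul_apply_pos f hμ0 hμ fun l _ => hx₀ l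
  rw [← ha, LinearMap.smul_apply, smul_eq_mul] at hpos
  have ha0 : 0 < a := pos_of_mul_pos_left hpos (hx₀ i).le
  refine hf.ne_sum_smul (notMem_erase i univ) (c := fun l => a⁻¹ * μ l)
    (fun l hl => mul_nonneg (inv_nonneg.2 ha0.le) (hμ0 l hl)) ?_
  simp_rw [mul_smul, ← smul_sum, ← ha, inv_smul_smul₀ ha0.ne']

variable {j k : ι}

theorem Irredundant.not_ker_inf_ker_le_ker (hf : Irredundant f) (hx₀ : ∀ i, 0 < f i x₀)
    (hjk : j ≠ k) {i : ι} (hij : i ≠ j) (hik : i ≠ k) :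
    ¬ ker (f j) ⊓ ker (f k) ≤ ker (f i) := by
  intro hle
  have hspan := mem_span_image_of_forall_eq_zero f {j, k} (g := f i) fun x hx =>
    hle ⟨hx j (by simp), hx k (by simp)⟩
  rw [coe_pair, Set.image_pair, Submodule.mem_span_pair] at hspan
  obtain ⟨a, b, hab⟩ := hspan
  obtain ⟨zj, hzj, hzj'⟩ := hf.exists_eq_zero_forall_ne_pos hx₀ j
  obtain ⟨zk, hzk, hzk'⟩ := hf.exists_eq_zero_forall_ne_pos hx₀ k
  have ha := pos_of_smul_add_smul_eq ((add_comm _ _).trans hab) hzk (hzk' j hjk) (hzk' i hik)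
  have hb := pos_of_smul_add_smul_eq hab hzj (hzj' k hjk.symm) (hzj' i hij)
  refine hf.ne_sum_smul (i := i) (u := {j, k}) (by simp [hij, hik])
    (c := fun l => if l = j then a else b) (fun l _ => ?_) ?_
  · split_ifs
    exacts [ha.le, hb.le]
  rw [sum_pair hjk, ← hab]
  simp [hjk.symm]

theorem Irredundant.pairInConeOfRest_of_forall_exists_nonpos (hf : Irredundant f)
    (hx₀ : ∀ i, 0 < f i x₀) (hjk : j ≠ k)
    (h : ∀ x, f j x = 0 → f k x = 0 → ∃ i ∈ (univ.erase j).erase k, f i x ≤ 0) :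
    PairInConeOfRest f j k := by
  have hs : ∀ {i}, i ∈ (univ.erase j).erase k ↔ i ≠ j ∧ i ≠ k := by simp [and_comm]
  obtain ⟨μ, hμ0, hμ, hspan⟩ := exists_sum_smul_mem_span_of_forall_exists_nonpos f
    ((univ.erase j).erase k) {j, k} fun x hx => h x (hx j (by simp)) (hx k (by simp))
  rw [coe_pair, Set.image_pair, Submodule.mem_span_pair] at hspan
  obtain ⟨a, b, hab⟩ := hspan
  obtain ⟨zj, hzj, hzj'⟩ := hf.exists_eq_zero_forall_ne_pos hx₀ j
  obtain ⟨zk, hzk, hzk'⟩ := hf.exists_eq_zero_forall_ne_pos hx₀ k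
  have ha := pos_of_smul_add_smul_eq ((add_comm _ _).trans hab) hzk (hzk' j hjk)
    (sum_smul_apply_pos f hμ0 hμ fun i hi => hzk' i (hs.1 hi).2)
  have hb := pos_of_smul_add_smul_eq hab hzj (hzj' k hjk.symm)
    (sum_smul_apply_pos f hμ0 hμ fun i hi => hzj' i (hs.1 hi).1)
  refine ⟨Function.update (Function.update μ j a) k b, fun i hij hik => ?_, ?_, ?_, ?_⟩
  · simpa [hij, hik] using hμ0 i (hs.2 ⟨hij, hik⟩)
  · simpa [hjk] using ha
  · simpa using hb
  · calc _ = ∑ i ∈ (univ.erase j).erase k, μ i • f i :=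
          sum_congr rfl fun i hi => by simp [(hs.1 hi).1, (hs.1 hi).2]
      _ = _ := by simp [← hab, hjk]

theorem PairInConeOfRest.exists_forall_eq_zero (h : PairInConeOfRest f j k)
    (hx₀ : ∀ i, 0 < f i x₀) : ∃ i ∈ (univ.erase j).erase k,
      ∀ x, (∀ l, 0 ≤ f l x) → f j x = 0 → f k x = 0 → f i x = 0 := by
  obtain ⟨lam, hlam0, hj, hk, heq⟩ := h
  have hs : ∀ {i}, i ∈ (univ.erase j).erase k → 0 ≤ lam i := fun hi => by
    simp only [mem_erase] at hi
    exact hlam0 _ hi.2.1 hi.1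
  obtain ⟨i, hi, hlami⟩ : ∃ i ∈ (univ.erase j).erase k, 0 < lam i := by
    by_contra! hle
    have := LinearMap.congr_fun heq x₀
    rw [sum_eq_zero fun i hi => by rw [le_antisymm (hle i hi) (hs hi), zero_smul]] at this
    simp only [LinearMap.zero_apply, LinearMap.add_apply, LinearMap.smul_apply, smul_eq_mul]
      at this
    nlinarith [hx₀ j, hx₀ k]
  refine ⟨i, hi, fun x hx hjx hkx => ?_⟩
  have hsum := LinearMap.congr_fun heq x
  simp only [LinearMap.sum_apply, LinearMap.add_apply, LinearMap.smul_apply, smul_eq_mul, hjx,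
    hkx, mul_zero, add_zero] at hsum
  have := (sum_eq_zero_iff_of_nonneg fun l hl => mul_nonneg (hs hl) (hx l)).1 hsum i hi
  exact (mul_eq_zero.1 this).resolve_left hlami.ne'

theorem Irredundant.finrank_ker_inf_ker_add_two [FiniteDimensional ℝ E] (hf : Irredundant f)
    (hx₀ : ∀ i, 0 < f i x₀) (hjk : j ≠ k) :
    finrank ℝ (ker (f j) ⊓ ker (f k) : Submodule ℝ E) + 2 = finrank ℝ E := by
  obtain ⟨zj, hzj, hzj'⟩ := hf.exists_eq_zero_forall_ne_pos hx₀ j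
  obtain ⟨zk, hzk, hzk'⟩ := hf.exists_eq_zero_forall_ne_pos hx₀ k
  exact _root_.finrank_ker_inf_ker_add_two hzj (hzj' k hjk.symm).ne' (hzk' j hjk).ne' hzk

theorem Irredundant.span_face_inter_face_eq_iff (hf : Irredundant f) (hx₀ : ∀ i, 0 < f i x₀)
    (hjk : j ≠ k) : Submodule.span ℝ (face f j ∩ face f k) = ker (f j) ⊓ ker (f k) ↔
      ¬ PairInConeOfRest f j k := by
  constructor
  · intro hspan hP
    obtain ⟨i, hi, hzero⟩ := hP.exists_forall_eq_zero hx₀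
    simp only [mem_erase] at hi
    refine hf.not_ker_inf_ker_le_ker hx₀ hjk hi.2.1 hi.1 ?_
    rw [← hspan, Submodule.span_le]
    rintro x ⟨⟨hxC, hjx⟩, -, hkx⟩
    exact hzero x hxC hjx hkx
  · intro hP
    obtain ⟨w, hwW, hw⟩ : ∃ w ∈ ker (f j) ⊓ ker (f k),
        ∀ i ∈ (univ.erase j).erase k, 0 < f i w := by
      by_contra! h
      exact hP (hf.pairInConeOfRest_of_forall_exists_nonpos hx₀ hjk fun x hjx hkx =>
        h x ⟨hjx, hkx⟩)
    rw [face_inter_face_eq]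
    exact span_inter_setOf_nonneg_eq f _ ((univ.erase j).erase k) hwW hw

end PolyhedralCone

theorem facets_not_adjacent_iff_combination_general {n p : ℕ}
    (f : Fin p → ((Fin n → ℝ) →ₗ[ℝ] ℝ))
    (C : Set (Fin n → ℝ)) (hC : C = {x | ∀ i, 0 ≤ f i x})
    (hfull : Submodule.span ℝ C = ⊤)
    (F : Fin p → Set (Fin n → ℝ)) (hF : ∀ i, F i = {x ∈ C | f i x = 0})
    (hirred : ∀ i, ¬ ∃ mu : Fin p → ℝ, (∀ l, 0 ≤ mu l) ∧
      f i = ∑ l ∈ Finset.univ.erase i, mu l • f l)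
    (j k : Fin p) (hjk : j ≠ k) :
    faceDim (F j ∩ F k) < n - 2 ↔
      ∃ lam : Fin p → ℝ, (∀ i, i ≠ j → i ≠ k → 0 ≤ lam i) ∧
        0 < lam j ∧ 0 < lam k ∧
        ∑ i ∈ (Finset.univ.erase j).erase k, lam i • f i =
          lam j • f j + lam k • f k := by
  subst hC
  obtain rfl : F = face f := funext hF
  have hf : Irredundant f := hirred
  obtain ⟨x₀, hx₀⟩ := exists_forall_pos_of_span_eq_top hf.ne_zero hfull
  have hW := hf.finrank_ker_inf_ker_add_two hx₀ hjk
  rw [finrank_fin_fun] at hW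
  change finrank ℝ (Submodule.span ℝ (face f j ∩ face f k)) < n - 2 ↔ PairInConeOfRest f j k
  rw [← not_iff_not, not_lt, ← hf.span_face_inter_face_eq_iff hx₀ hjk]
  exact ⟨fun h => Submodule.eq_of_le_of_finrank_le (span_face_inter_face_le f j k) (by omega),
    fun h => by rw [h]; omega⟩

/-- for a full-dimensional polyhedral cone given by an
irredundant family of facet-inducing functionals, two distinct facets
`F j`, `F k` are NOT adjacent iff `λ_j f_j + λ_k f_k` is a nonnegative
combination of the other `f_i`'s for some `λ_j, λ_k > 0`. -/
theorem facets_not_adjacent_iff_combination {n p : ℕ}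
    (f : Fin p → ((Fin n → ℝ) →ₗ[ℝ] ℝ))
    (C : Set (Fin n → ℝ)) (hC : C = {x | ∀ i, 0 ≤ f i x})
    (hfull : Submodule.span ℝ C = ⊤)
    (F : Fin p → Set (Fin n → ℝ)) (hF : ∀ i, F i = {x ∈ C | f i x = 0})
    (hfacet : ∀ i, faceDim (F i) = n - 1)
    (hirred : ∀ i, ¬ ∃ mu : Fin p → ℝ, (∀ l, 0 ≤ mu l) ∧
      f i = ∑ l ∈ Finset.univ.erase i, mu l • f l)
    (j k : Fin p) (hjk : j ≠ k) (hFjk : F j ≠ F k) :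
    faceDim (F j ∩ F k) < n - 2 ↔
      ∃ lam : Fin p → ℝ, (∀ i, i ≠ j → i ≠ k → 0 ≤ lam i) ∧
        0 < lam j ∧ 0 < lam k ∧
        ∑ i ∈ (Finset.univ.erase j).erase k, lam i • f i =
          lam j • f j + lam k • f k :=
  facets_not_adjacent_iff_combination_general f C hC hfull F hF hirred j k hjk
end

section
/- Let C = {x ∈ ℝⁿ : fᵢ(x) ≥ 0 for all i ∈ I} be a full-dimensional polyhedral cone given by a finite irredundant family of linear functionals (fᵢ)_{i∈I}, i.e. each Fᵢ = {x ∈ C : fᵢ(x) = 0} is a facet of C and no fᵢ is a nonnegative combination of the others. Let j, k ∈ I be distinct with F_j ≠ F_k. Then F_j and F_k are NOT adjacent (i.e. dim(F_j ∩ F_k) < n − 2) if and only if f_j(x) ≥ 0 for every x ∈ ℝⁿ satisfying fᵢ(x) ≥ 0 for all i ∈ I∖{j,k} and f_k(x) ≤ 0. -/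
/-!
Let `K = ker f_j ∩ ker f_k`; irredundancy makes `f_j, f_k` independent, so `dim K = n - 2`, and
the ridge `F_j ∩ F_k` (always inside `K`) spans `K` exactly when it contains a point `z` at which
every other constraint is strict: such a point spans `K` because `u + M z` lies in the ridge for
`u ∈ K` and `M` large, and conversely, if the ridge spans `K`, no other `f_i` can vanish on it
(otherwise `f_i = a f_j + b f_k` with `a, b ≥ 0`, against irredundancy), so summing witnesses
gives `z`.

Such a `z` exists iff the condition on the right fails. Given `z`, the point `M z - y`, with `y`
in the relative interior of `F_k`, violates it. Given a violating `x`, the point `x + b y + c w`, with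
`w` in the relative interior of `F_j` and `b > 0`, `c ≥ 0` chosen to cancel `f_j x` and `f_k x`,
is such a `z`.
-/

open Module LinearMap Submodule

section LinearAlgebra

variable {𝕜 E : Type*} [Field 𝕜] [AddCommGroup E] [Module 𝕜 E]

theorem exists_smul_add_smul_eq_of_ker_inf_le {f g h : E →ₗ[𝕜] 𝕜}
    (H : ker f ⊓ ker g ≤ ker h) : ∃ a b : 𝕜, a • f + b • g = h := by
  rw [← mem_span_pair, ← Matrix.range_cons_cons_empty f g ![]]
  exact mem_span_of_iInf_ker_le_ker ((le_inf (iInf_le _ 0) (iInf_le _ 1)).trans H)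

theorem exists_apply_eq_one_apply_eq_zero {f g : E →ₗ[𝕜] 𝕜} (h : ¬ ker g ≤ ker f) :
    ∃ w, f w = 1 ∧ g w = 0 := by
  obtain ⟨u, hgu, hfu⟩ := SetLike.not_le_iff_exists.mp h
  exact ⟨(f u)⁻¹ • u, by simp_all, by simp_all⟩

theorem finrank_ker_inf_ker_add_two_s6 [FiniteDimensional 𝕜 E] {f g : E →ₗ[𝕜] 𝕜}
    (hfg : ¬ ker f ≤ ker g) (hgf : ¬ ker g ≤ ker f) :
    finrank 𝕜 (ker f ⊓ ker g : Submodule 𝕜 E) + 2 = finrank 𝕜 E := by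
  obtain ⟨v, hfv, hgv⟩ := exists_apply_eq_one_apply_eq_zero hgf
  obtain ⟨w, hgw, hfw⟩ := exists_apply_eq_one_apply_eq_zero hfg
  have hsurj : Function.Surjective (f.prod g) := fun st =>
    ⟨st.1 • v + st.2 • w, by simp [hfv, hgv, hfw, hgw]⟩
  rw [← LinearMap.ker_prod, ← (f.prod g).finrank_range_add_finrank_ker, range_eq_top.2 hsurj,
    finrank_top, finrank_prod, finrank_self]
  ring

theorem finrank_lt_finrank_iff_ne_of_le [FiniteDimensional 𝕜 E] {U V : Submodule 𝕜 E}
    (h : U ≤ V) : finrank 𝕜 U < finrank 𝕜 V ↔ U ≠ V :=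
  ⟨fun hlt heq => hlt.ne (by rw [heq]), fun hne => finrank_lt_finrank_of_lt (h.lt_of_ne hne)⟩

theorem eq_ker_of_le_of_finrank_le [FiniteDimensional 𝕜 E] {g : E →ₗ[𝕜] 𝕜} (hg : g ≠ 0)
    {U : Submodule 𝕜 E} (hU : U ≤ ker g) (h : finrank 𝕜 E - 1 ≤ finrank 𝕜 U) : U = ker g := by
  refine eq_of_le_of_finrank_le hU ?_
  have := Submodule.finrank_lt (mt ker_eq_top.1 hg)
  omega

end LinearAlgebra

theorem exists_pos_of_not_span_le_ker {𝕜 E : Type*} [Field 𝕜] [LinearOrder 𝕜]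
    [AddCommGroup E] [Module 𝕜 E] {s : Set E} {g : E →ₗ[𝕜] 𝕜} (hs : ∀ x ∈ s, 0 ≤ g x)
    (h : ¬ span 𝕜 s ≤ ker g) : ∃ x ∈ s, 0 < g x := by
  by_contra! H
  exact h (span_le.2 fun x hx => mem_ker.2 ((H x hx).antisymm (hs x hx)))

section OrderedField

variable {ι 𝕜 E : Type*} [Field 𝕜] [LinearOrder 𝕜] [IsStrictOrderedRing 𝕜]
  [AddCommGroup E] [Module 𝕜 E]

open Filter in
theorem exists_forall_pos_add_smul [Finite ι] {P : ι → Prop} {f : ι → E →ₗ[𝕜] 𝕜} {z : E}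
    (hz : ∀ i, P i → 0 < f i z) (v : E) : ∃ M : 𝕜, ∀ i, P i → 0 < f i (v + M • z) := by
  refine (eventually_all.2 fun i => eventually_imp_distrib_left.2 fun hi => ?_).exists (f := atTop)
  have : Tendsto (fun M : 𝕜 => f i v + M * f i z) atTop atTop :=
    tendsto_atTop_add_const_left _ _ (tendsto_id.atTop_mul_const (hz i hi))
  simpa using this.eventually_gt_atTop (0 : 𝕜)

end OrderedField

section Cone

variable {ι 𝕜 E : Type*} [Field 𝕜] [LinearOrder 𝕜] [AddCommGroup E] [Module 𝕜 E]
  (f : ι → E →ₗ[𝕜] 𝕜)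

def coneFace (S : Set ι) : Set E := {x | (∀ i, 0 ≤ f i x) ∧ ∀ i ∈ S, f i x = 0}

/-- `z` lies in the relative interior of `coneFace f S` and the constraints tight at `z` are
exactly those indexed by `S`. -/
def IsRelIntPoint (S : Set ι) (z : E) : Prop := (∀ i ∈ S, f i z = 0) ∧ ∀ i ∉ S, 0 < f i z

def IsIrredundant [Fintype ι] [DecidableEq ι] : Prop :=
  ∀ i, ¬ ∃ mu : ι → 𝕜, (∀ l, 0 ≤ mu l) ∧ f i = ∑ l ∈ Finset.univ.erase i, mu l • f l

variable {f} {S : Set ι}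

theorem IsRelIntPoint.mem_coneFace {z : E} (hz : IsRelIntPoint f S z) : z ∈ coneFace f S := by
  refine ⟨fun i => ?_, hz.1⟩
  by_cases hi : i ∈ S
  · exact (hz.1 i hi).ge
  · exact (hz.2 i hi).le

theorem coneFace_singleton (k : ι) :
    coneFace f {k} = {x ∈ {x | ∀ i, 0 ≤ f i x} | f k x = 0} := by
  simp [coneFace]

theorem coneFace_pair (j k : ι) : coneFace f {j, k} = coneFace f {j} ∩ coneFace f {k} := by
  ext x
  simp only [coneFace, Set.mem_inter_iff, Set.mem_ofPred_eq, Set.mem_insert_iff,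
    Set.mem_singleton_iff, forall_eq, forall_eq_or_imp]
  tauto

theorem span_coneFace_le : span 𝕜 (coneFace f S) ≤ ⨅ i ∈ S, ker (f i) :=
  span_le.2 fun _ hx => by
    simpa only [SetLike.mem_coe, Submodule.mem_iInf, LinearMap.mem_ker] using hx.2

theorem IsIrredundant.ne_zero [Fintype ι] [DecidableEq ι] (h : IsIrredundant f) (i : ι) :
    f i ≠ 0 :=
  fun hi => h i ⟨0, fun _ => le_rfl, by simp [hi]⟩

variable [IsStrictOrderedRing 𝕜]

theorem IsRelIntPoint.span_coneFace [Finite ι] {z : E} (hz : IsRelIntPoint f S z) :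
    span 𝕜 (coneFace f S) = ⨅ i ∈ S, ker (f i) := by
  refine span_coneFace_le.antisymm fun u hu => ?_
  have hu : ∀ i ∈ S, f i u = 0 := by simpa only [Submodule.mem_iInf, LinearMap.mem_ker] using hu
  obtain ⟨M, hM⟩ := exists_forall_pos_add_smul hz.2 u
  have hzM : IsRelIntPoint f S (u + M • z) := ⟨fun i hi => by simp [hu i hi, hz.1 i hi], hM⟩
  simpa using sub_mem (subset_span hzM.mem_coneFace) (smul_mem _ M (subset_span hz.mem_coneFace))

theorem exists_isRelIntPoint_of_forall_exists_pos [Fintype ι]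
    (h : ∀ i ∉ S, ∃ y ∈ coneFace f S, 0 < f i y) : ∃ z, IsRelIntPoint f S z := by
  have : ∀ i, ∃ y ∈ coneFace f S, i ∉ S → 0 < f i y := by
    intro i
    by_cases hi : i ∈ S
    · exact ⟨0, ⟨by simp, by simp⟩, fun h => absurd hi h⟩
    · obtain ⟨y, hy, hpos⟩ := h i hi
      exact ⟨y, hy, fun _ => hpos⟩
  choose y hyS hy using this
  refine ⟨∑ i, y i, fun m hm => by simp [(hyS _).2 m hm], fun i hi => ?_⟩
  rw [map_sum]
  exact Finset.sum_pos' (fun m _ => (hyS m).1 i) ⟨i, Finset.mem_univ _, hy i hi⟩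

theorem exists_isRelIntPoint_pair_iff [Finite ι] {j k : ι} (hjk : j ≠ k) {w y : E}
    (hw : IsRelIntPoint f {j} w) (hy : IsRelIntPoint f {k} y) :
    (∃ z, IsRelIntPoint f {j, k} z) ↔
      ∃ x, (∀ i, i ≠ j → i ≠ k → 0 ≤ f i x) ∧ f k x ≤ 0 ∧ f j x < 0 := by
  have hwk : 0 < f k w := hw.2 k hjk.symm
  have hyj : 0 < f j y := hy.2 j hjk
  constructor
  · rintro ⟨z, hz⟩
    obtain ⟨M, hM⟩ := exists_forall_pos_add_smul hz.2 (-y)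
    refine ⟨-y + M • z, fun i hij hik => (hM i (by simp [hij, hik])).le, ?_, ?_⟩
    · simp [hy.1 k rfl, hz.1 k (by simp)]
    · simpa [hz.1 j (by simp)] using hyj
  · rintro ⟨x, hx, hxk, hxj⟩
    set b := -f j x / f j y
    set c := -f k x / f k w
    have hb : 0 < b := div_pos (neg_pos.2 hxj) hyj
    have hc : 0 ≤ c := div_nonneg (neg_nonneg.2 hxk) hwk.le
    refine ⟨x + b • y + c • w, fun i hi => ?_, fun i hi => ?_⟩
    · rcases hi with rfl | rfl
      · simp [b, hw.1 i rfl, hyj.ne']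
      · simp [c, hy.1 i rfl, hwk.ne']
    · simp only [Set.mem_insert_iff, Set.mem_singleton_iff, not_or] at hi
      have hyi := hy.2 i hi.2
      have hwi := hw.2 i hi.1
      simp only [map_add, map_smul, smul_eq_mul]
      have := hx i hi.1 hi.2
      positivity

variable [Fintype ι] [DecidableEq ι] {i j k : ι}

theorem IsIrredundant.smul_add_smul_ne (h : IsIrredundant f) (hji : j ≠ i) (hki : k ≠ i)
    {a b : 𝕜} (ha : 0 ≤ a) (hb : 0 ≤ b) : a • f j + b • f k ≠ f i := by
  intro heq
  have hmu : (0 : ι → 𝕜) ≤ Pi.single j a + Pi.single k b :=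
    add_nonneg (Pi.single_nonneg.2 ha) (Pi.single_nonneg.2 hb)
  refine h i ⟨_, hmu, ?_⟩
  simp [add_smul, Finset.sum_add_distrib, Pi.single_apply, ite_smul, hji, hki, heq]

theorem IsIrredundant.not_ker_le_ker (h : IsIrredundant f)
    (hfull : span 𝕜 {x | ∀ i, 0 ≤ f i x} = ⊤) (hki : k ≠ i) : ¬ ker (f k) ≤ ker (f i) := by
  intro hle
  obtain ⟨a, b, hab⟩ := exists_smul_add_smul_eq_of_ker_inf_le (inf_le_left.trans hle)
  obtain ⟨x, hx, hpos⟩ := exists_pos_of_not_span_le_ker (s := {x | ∀ i, 0 ≤ f i x})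
    (fun x hx => hx k) (by rw [hfull, top_le_iff, ker_eq_top]; exact h.ne_zero k)
  have hab' : (a + b) • f k + (0 : 𝕜) • f k = f i := by rw [add_smul, zero_smul, add_zero, hab]
  have hsum : 0 ≤ a + b := by
    have hix := hx i
    rw [← hab'] at hix
    simp only [LinearMap.add_apply, LinearMap.smul_apply, smul_eq_mul, zero_mul, add_zero] at hix
    exact nonneg_of_mul_nonneg_left hix hpos
  exact h.smul_add_smul_ne hki hki hsum le_rfl hab'

theorem IsIrredundant.exists_isRelIntPoint_singleton (h : IsIrredundant f)
    (hfull : span 𝕜 {x | ∀ i, 0 ≤ f i x} = ⊤) (hspan : span 𝕜 (coneFace f {k}) = ker (f k)) :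
    ∃ y, IsRelIntPoint f {k} y :=
  exists_isRelIntPoint_of_forall_exists_pos fun _ hi =>
    exists_pos_of_not_span_le_ker (fun _ hx => hx.1 _) (hspan ▸ h.not_ker_le_ker hfull (Ne.symm hi))

theorem IsIrredundant.exists_isRelIntPoint_pair (h : IsIrredundant f) (hjk : j ≠ k)
    {w y : E} (hw : IsRelIntPoint f {j} w) (hy : IsRelIntPoint f {k} y)
    (hspan : span 𝕜 (coneFace f {j, k}) = ker (f j) ⊓ ker (f k)) :
    ∃ z, IsRelIntPoint f {j, k} z := by
  refine exists_isRelIntPoint_of_forall_exists_pos fun i hi =>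
    exists_pos_of_not_span_le_ker (fun _ hx => hx.1 i) ?_
  simp only [Set.mem_insert_iff, Set.mem_singleton_iff, not_or] at hi
  rw [hspan]
  intro hle
  obtain ⟨a, b, hab⟩ := exists_smul_add_smul_eq_of_ker_inf_le hle
  have hwi := LinearMap.congr_fun hab w
  have hyi := LinearMap.congr_fun hab y
  simp only [LinearMap.add_apply, LinearMap.smul_apply, smul_eq_mul, hw.1 j rfl,
    hy.1 k rfl, mul_zero, add_zero, zero_add] at hwi hyi
  have ha : 0 ≤ a := nonneg_of_mul_nonneg_left (hyi ▸ (hy.2 i hi.2).le) (hy.2 j hjk)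
  have hb : 0 ≤ b := nonneg_of_mul_nonneg_left (hwi ▸ (hw.2 i hi.1).le) (hw.2 k hjk.symm)
  exact h.smul_add_smul_ne (Ne.symm hi.1) (Ne.symm hi.2) ha hb hab

end Cone

theorem facets_not_adjacent_iff_lp_general {n p : ℕ}
    (f : Fin p → ((Fin n → ℝ) →ₗ[ℝ] ℝ))
    (C : Set (Fin n → ℝ)) (hC : C = {x | ∀ i, 0 ≤ f i x})
    (hfull : Submodule.span ℝ C = ⊤)
    (F : Fin p → Set (Fin n → ℝ)) (hF : ∀ i, F i = {x ∈ C | f i x = 0})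
    (hfacet : ∀ i, faceDim (F i) = n - 1)
    (hirred : ∀ i, ¬ ∃ mu : Fin p → ℝ, (∀ l, 0 ≤ mu l) ∧
      f i = ∑ l ∈ Finset.univ.erase i, mu l • f l)
    (j k : Fin p) (hjk : j ≠ k) :
    faceDim (F j ∩ F k) < n - 2 ↔
      ∀ x : Fin n → ℝ, (∀ i, i ≠ j → i ≠ k → 0 ≤ f i x) → f k x ≤ 0 →
        0 ≤ f j x := by
  subst hC
  have hirr : IsIrredundant f := hirred
  have hfacet_eq : ∀ l, F l = coneFace f {l} := fun l => (hF l).trans (coneFace_singleton l).symm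
  have hspan : ∀ l, span ℝ (coneFace f {l}) = ker (f l) := fun l =>
    eq_ker_of_le_of_finrank_le (hirr.ne_zero l) (iInf_singleton (f := fun i => ker (f i)) ▸
      span_coneFace_le) (by rw [finrank_fin_fun, ← hfacet l, hfacet_eq]; rfl)
  obtain ⟨w, hw⟩ := hirr.exists_isRelIntPoint_singleton hfull (hspan j)
  obtain ⟨y, hy⟩ := hirr.exists_isRelIntPoint_singleton hfull (hspan k)
  have hK : n - 2 = finrank ℝ (ker (f j) ⊓ ker (f k) : Submodule ℝ (Fin n → ℝ)) := by
    have := finrank_ker_inf_ker_add_two_s6 (hirr.not_ker_le_ker hfull hjk)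
      (hirr.not_ker_le_ker hfull hjk.symm)
    rw [finrank_fin_fun] at this
    omega
  have hridge : F j ∩ F k = coneFace f {j, k} := by rw [hfacet_eq, hfacet_eq, coneFace_pair]
  have hadj : span ℝ (coneFace f {j, k}) = ker (f j) ⊓ ker (f k) ↔
      ∃ z, IsRelIntPoint f {j, k} z :=
    ⟨hirr.exists_isRelIntPoint_pair hjk hw hy, fun ⟨z, hz⟩ => by rw [hz.span_coneFace, iInf_pair]⟩
  rw [hridge, faceDim, hK, finrank_lt_finrank_iff_ne_of_le
    (iInf_pair (f := fun i => ker (f i)) ▸ span_coneFace_le), Ne, hadj,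
    exists_isRelIntPoint_pair_iff hjk hw hy]
  simp only [not_exists, not_and, not_lt]

/-- for a full-dimensional polyhedral cone given by an
irredundant family of facet-inducing functionals, two distinct facets
`F j`, `F k` are NOT adjacent iff `f_j` is nonnegative on the cone obtained
by dropping `f_j` and replacing `f_k` by `−f_k`. -/
theorem facets_not_adjacent_iff_lp {n p : ℕ}
    (f : Fin p → ((Fin n → ℝ) →ₗ[ℝ] ℝ))
    (C : Set (Fin n → ℝ)) (hC : C = {x | ∀ i, 0 ≤ f i x})
    (hfull : Submodule.span ℝ C = ⊤)
    (F : Fin p → Set (Fin n → ℝ)) (hF : ∀ i, F i = {x ∈ C | f i x = 0})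
    (hfacet : ∀ i, faceDim (F i) = n - 1)
    (hirred : ∀ i, ¬ ∃ mu : Fin p → ℝ, (∀ l, 0 ≤ mu l) ∧
      f i = ∑ l ∈ Finset.univ.erase i, mu l • f l)
    (j k : Fin p) (hjk : j ≠ k) (hFjk : F j ≠ F k) :
    faceDim (F j ∩ F k) < n - 2 ↔
      ∀ x : Fin n → ℝ, (∀ i, i ≠ j → i ≠ k → 0 ≤ f i x) → f k x ≤ 0 →
        0 ≤ f j x :=
  facets_not_adjacent_iff_lp_general f C hC hfull F hF hfacet hirred j k hjk
end

section
/- Let f₁, …, f_m and f be linear functionals on ℝⁿ. Then f(x) ≥ 0 for all x in the polyhedral cone {x ∈ ℝⁿ : fᵢ(x) ≥ 0 for all i} if and only if there exist λ₁, …, λ_m ≥ 0 with f = Σᵢ λᵢ fᵢ (i.e. a valid inequality for the cone is a nonnegative combination of the defining inequalities, and otherwise f is unbounded below on the cone). -/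
section FarkasAux
open Finset
open scoped RealInnerProductSpace

/-- Conic Carathéodory: any nonnegative combination of vectors equals a nonnegative
combination supported on a subset on which the vectors are linearly independent. -/
lemma conic_caratheodory {E : Type*} [AddCommGroup E] [Module ℝ E] {m : ℕ}
    (v : Fin m → E) :
    ∀ (s : Finset (Fin m)) (lam : Fin m → ℝ), (∀ i, 0 ≤ lam i) →
      (∀ i ∉ s, lam i = 0) →
      ∃ (t : Finset (Fin m)) (mu : Fin m → ℝ), (∀ i, 0 ≤ mu i) ∧ (∀ i ∉ t, mu i = 0) ∧
        LinearIndependent ℝ (fun i : t => v i) ∧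
        ∑ i, mu i • v i = ∑ i, lam i • v i := by
  intro s
  induction s using Finset.strongInduction with
  | _ s ih =>
    intro lam hlam hsupp
    by_cases hli : LinearIndependent ℝ (fun i : s => v i)
    · exact ⟨s, lam, hlam, hsupp, hli, rfl⟩
    · rw [Fintype.not_linearIndependent_iff] at hli
      obtain ⟨g, hg0, j, hgj⟩ := hli
      -- extend g to all of Fin m
      set c : Fin m → ℝ := fun i => if h : i ∈ s then g ⟨i, h⟩ else 0 with hc
      have hcs : ∀ i ∉ s, c i = 0 := fun i hi => by simp [hc, hi]
      have hcsum : ∑ i, c i • v i = 0 := by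
        rw [← Finset.sum_subset (Finset.subset_univ s)
          (fun i _ hi => by rw [hcs i hi, zero_smul])]
        rw [← Finset.sum_attach s (fun i => c i • v i)]
        convert hg0 using 1
        refine Finset.sum_congr rfl fun i _ => ?_
        simp [hc, i.2]
      have hcj : c (j : Fin m) ≠ 0 := by simpa [hc, j.2] using hgj
      -- WLOG there is a positive coefficient
      obtain ⟨c, hcs, hcsum, hcpos⟩ :
          ∃ c : Fin m → ℝ, (∀ i ∉ s, c i = 0) ∧ (∑ i, c i • v i = 0) ∧ ∃ i, 0 < c i := by
        rcases lt_or_gt_of_ne hcj with h | h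
        · refine ⟨-c, fun i hi => by simp [hcs i hi], by simpa using hcsum, j, by simpa using h⟩
        · exact ⟨c, hcs, hcsum, j, h⟩
      obtain ⟨j, hj⟩ := hcpos
      have hjs : (j : Fin m) ∈ s := by
        by_contra h; rw [hcs j h] at hj; exact lt_irrefl 0 hj
      -- minimize lam i / c i over positive c i
      have hne : (s.filter fun i => 0 < c i).Nonempty :=
        ⟨j, Finset.mem_filter.2 ⟨hjs, hj⟩⟩
      obtain ⟨i₀, hi₀mem, hi₀min⟩ := Finset.exists_min_image _ (fun i => lam i / c i) hne
      rw [Finset.mem_filter] at hi₀mem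
      obtain ⟨hi₀s, hi₀c⟩ := hi₀mem
      set t : ℝ := lam i₀ / c i₀ with ht
      have ht0 : 0 ≤ t := div_nonneg (hlam i₀) hi₀c.le
      set mu : Fin m → ℝ := fun i => lam i - t * c i with hmu
      have hmu0 : ∀ i, 0 ≤ mu i := by
        intro i
        rcases le_or_gt (c i) 0 with h | h
        · have : t * c i ≤ 0 := mul_nonpos_of_nonneg_of_nonpos ht0 h
          simp only [hmu]; linarith [hlam i]
        · have his : i ∈ s := by
            by_contra hh; rw [hcs i hh] at h; exact lt_irrefl 0 h
          have := hi₀min i (Finset.mem_filter.2 ⟨his, h⟩)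
          rw [div_le_div_iff₀ hi₀c h] at this
          have : t * c i ≤ lam i := by
            rw [ht, div_mul_eq_mul_div, div_le_iff₀ hi₀c]
            linarith [this]
          simp only [hmu]; linarith
      have hmui₀ : mu i₀ = 0 := by
        simp only [hmu, ht]
        field_simp
        ring
      have hmusupp : ∀ i ∉ s.erase i₀, mu i = 0 := by
        intro i hi
        by_cases his : i ∈ s
        · have : i = i₀ := by
            by_contra hne
            exact hi (Finset.mem_erase.2 ⟨hne, his⟩)
          rw [this]; exact hmui₀
        · simp only [hmu, hsupp i his, hcs i his, mul_zero, sub_zero]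
      have hsum : ∑ i, mu i • v i = ∑ i, lam i • v i := by
        simp only [hmu, sub_smul, mul_smul, Finset.sum_sub_distrib, ← Finset.smul_sum, hcsum,
          smul_zero, sub_zero]
      obtain ⟨t, mu', h1, h2, h3, h4⟩ := ih (s.erase i₀) (Finset.erase_ssubset hi₀s) mu hmu0 hmusupp
      exact ⟨t, mu', h1, h2, h3, h4.trans hsum⟩

lemma isClosed_cone_gen {E : Type*} [NormedAddCommGroup E] [NormedSpace ℝ E]
    [FiniteDimensional ℝ E] {m : ℕ} (v : Fin m → E) :
    IsClosed {x : E | ∃ lam : Fin m → ℝ, (∀ i, 0 ≤ lam i) ∧ x = ∑ i, lam i • v i} := by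
  have key : {x : E | ∃ lam : Fin m → ℝ, (∀ i, 0 ≤ lam i) ∧ x = ∑ i, lam i • v i} =
      ⋃ t ∈ {t : Finset (Fin m) | LinearIndependent ℝ (fun i : t => v i)},
        (fun mu : t → ℝ => ∑ i : t, mu i • v i) '' {mu | ∀ i, 0 ≤ mu i} := by
    ext x
    simp only [Set.mem_iUnion, Set.mem_image, Set.mem_setOf_eq]
    constructor
    · rintro ⟨lam, hlam, rfl⟩
      obtain ⟨t, mu, h1, h2, h3, h4⟩ :=
        conic_caratheodory v Finset.univ lam hlam (fun i hi => absurd (mem_univ i) hi)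
      refine ⟨t, h3, fun i => mu i, fun i => h1 i, ?_⟩
      rw [← h4, ← Finset.sum_subset (Finset.subset_univ t)
        (fun i _ hi => by rw [h2 i hi, zero_smul]), ← Finset.sum_attach t (fun i => mu i • v i), Finset.univ_eq_attach]
    · rintro ⟨t, _, mu, hmu, rfl⟩
      refine ⟨fun i => if h : i ∈ t then mu ⟨i, h⟩ else 0, fun i => ?_, ?_⟩
      · by_cases h : i ∈ t <;> simp [h, hmu]
      · rw [← Finset.sum_subset (Finset.subset_univ t)
          (fun i _ hi => by simp [hi]),
          ← Finset.sum_attach t (fun i => (if h : i ∈ t then mu ⟨i, h⟩ else 0) • v i)]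
        exact (Finset.sum_congr rfl fun i _ => by simp [i.2]).symm
  rw [key]
  refine Set.Finite.isClosed_biUnion (Set.toFinite _) ?_
  rintro t ht
  set L : (t → ℝ) →ₗ[ℝ] E := Fintype.linearCombination ℝ (fun i : t => v i) with hL
  have himg : (fun mu : t → ℝ => ∑ i : t, mu i • v i) '' {mu | ∀ i, 0 ≤ mu i}
      = L '' {mu | ∀ i, 0 ≤ mu i} := by
    refine Set.image_congr fun mu _ => ?_
    rw [hL, Fintype.linearCombination_apply]
  rw [himg]
  have hker : LinearMap.ker L = ⊥ := by
    rw [LinearMap.ker_eq_bot']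
    intro mu hmu0
    have := Fintype.linearIndependent_iff.mp ht mu
    rw [hL, Fintype.linearCombination_apply] at hmu0
    exact funext (this hmu0)
  have hclosed : IsClosed {mu : t → ℝ | ∀ i, 0 ≤ mu i} := by
    have : {mu : t → ℝ | ∀ i, 0 ≤ mu i} = ⋂ i, {mu | 0 ≤ mu i} := by
      ext; simp [Set.mem_iInter]
    rw [this]
    exact isClosed_iInter fun i => isClosed_Ici.preimage (continuous_apply i)
  exact (L.isClosedEmbedding_of_injective hker).isClosedMap _ hclosed

lemma farkas_vec {E : Type*} [NormedAddCommGroup E] [InnerProductSpace ℝ E]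
    [FiniteDimensional ℝ E] {m : ℕ} (v : Fin m → E) (w : E)
    (h : ∀ y : E, (∀ i, 0 ≤ ⟪v i, y⟫) → 0 ≤ ⟪w, y⟫) :
    ∃ lam : Fin m → ℝ, (∀ i, 0 ≤ lam i) ∧ w = ∑ i, lam i • v i := by
  by_contra hw
  set K : ConvexCone ℝ E :=
    { carrier := {x : E | ∃ lam : Fin m → ℝ, (∀ i, 0 ≤ lam i) ∧ x = ∑ i, lam i • v i}
      smul_mem' := by
        rintro c hc x ⟨lam, hlam, rfl⟩
        exact ⟨c • lam, fun i => mul_nonneg hc.le (hlam i), by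
          simp [Finset.smul_sum, smul_smul]⟩
      add_mem' := by
        rintro x ⟨lam, hlam, rfl⟩ y ⟨mu, hmu, rfl⟩
        exact ⟨lam + mu, fun i => add_nonneg (hlam i) (hmu i), by
          simp [add_smul, Finset.sum_add_distrib]⟩ } with hK
  have hne : (K : Set E).Nonempty :=
    ⟨0, ⟨0, fun i => le_rfl, by simp⟩⟩
  have hcl : IsClosed (K : Set E) := isClosed_cone_gen v
  have hwK : w ∉ K := hw
  obtain ⟨y, hy1, hy2⟩ : ∃ y, (∀ x ∈ K, 0 ≤ ⟪x, y⟫) ∧ ⟪y, w⟫ < 0 := by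
    let C : ProperCone ℝ E :=
      { carrier := (K : Set E)
        add_mem' := fun ha hb => K.add_mem ha hb
        zero_mem' := ⟨0, fun i => le_rfl, by simp⟩
        smul_mem' := by
          rintro c x ⟨lam, hlam, rfl⟩
          exact ⟨(c : ℝ) • lam, fun i => mul_nonneg c.2 (hlam i), by
            rw [Finset.smul_sum]
            exact Finset.sum_congr rfl fun i _ => by
              show c • (lam i • v i) = ((c : ℝ) * lam i) • v i
              rw [mul_smul]; rfl⟩
        isClosed' := hcl }
    obtain ⟨y, h1, h2⟩ := ProperCone.hyperplane_separation' C (x₀ := w) hwK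
    exact ⟨y, fun x hx => h1 x hx, by rwa [real_inner_comm]⟩
  have hvy : ∀ i, 0 ≤ ⟪v i, y⟫ := by
    intro i
    refine hy1 (v i) ⟨fun j => if j = i then 1 else 0, fun j => by positivity, ?_⟩
    simp [ite_smul]
  have := h y hvy
  rw [real_inner_comm] at hy2
  linarith

/-- Farkas lemma for cones: a linear functional `g` is
nonnegative on the polyhedral cone `{x : fᵢ(x) ≥ 0 ∀ i}` iff it is a
nonnegative combination of the `fᵢ`. -/
theorem valid_iff_nonneg_combination {n m : ℕ}
    (f : Fin m → ((Fin n → ℝ) →ₗ[ℝ] ℝ)) (g : (Fin n → ℝ) →ₗ[ℝ] ℝ) :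
    (∀ x : Fin n → ℝ, (∀ i, 0 ≤ f i x) → 0 ≤ g x) ↔
      ∃ lam : Fin m → ℝ, (∀ i, 0 ≤ lam i) ∧ g = ∑ i, lam i • f i := by
  constructor
  · intro h
    set E := EuclideanSpace ℝ (Fin n)
    set e : E ≃L[ℝ] (Fin n → ℝ) := (EuclideanSpace.equiv (Fin n) ℝ) with he
    set rep : ((Fin n → ℝ) →ₗ[ℝ] ℝ) → E := fun φ =>
      (InnerProductSpace.toDual ℝ E).symm
        (LinearMap.toContinuousLinearMap (φ ∘ₗ (e : E →ₗ[ℝ] (Fin n → ℝ)))) with hrep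
    have hrep_apply : ∀ (φ : (Fin n → ℝ) →ₗ[ℝ] ℝ) (y : E), ⟪rep φ, y⟫ = φ (e y) := by
      intro φ y
      rw [hrep]
      simp [InnerProductSpace.toDual_symm_apply]
    obtain ⟨lam, hlam, hw⟩ := farkas_vec (fun i => rep (f i)) (rep g) (by
      intro y hy
      rw [hrep_apply]
      exact h (e y) fun i => by rw [← hrep_apply]; exact hy i)
    refine ⟨lam, hlam, ?_⟩
    refine LinearMap.ext fun x => ?_
    have : g (e (e.symm x)) = ⟪rep g, e.symm x⟫ := (hrep_apply g _).symm
    rw [e.apply_symm_apply] at this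
    rw [this, hw, sum_inner]
    simp only [real_inner_smul_left, hrep_apply]
    simp [e.apply_symm_apply]
  · rintro ⟨lam, hlam, rfl⟩
    intro x hx
    simp only [LinearMap.sum_apply, LinearMap.smul_apply, smul_eq_mul]
    exact Finset.sum_nonneg fun i _ => mul_nonneg (hlam i) (hx i)

end FarkasAux
end
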